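/- arXiv:2509.01490 — 2 statements merged into one kernel-verified Lean document; each statement's English description precedes it below -/
import Mathlib

section
/- The number of semistandard tableaux of hook shape (M+1, 1^{N−1}) with entries in {0, 1, …, d} (rows weakly increasing, columns strictly increasing) equals (d+M+1 choose M+N)·(M+N−1 choose M), for natural numbers M, d and positive N with N ≤ d+1. -/
/-!
Fix the corner entry `c`. The rest of the column is an `(N-1)`-subset of `{c+1, …, d}`, and the
shift `aᵢ ↦ aᵢ + i` turns the rest of the row into an `M`-subset of a set of size `d - c + M`.
With `k = d - c` the count is `∑ₖ C(k+M, M) C(k, N-1)`, and the identity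
`C(k+M, M) C(k, N-1) = C(k+M, M+N-1) C(M+N-1, M)` reduces this to the hockey-stick identity.
-/

/-- The semistandard tableaux of hook shape `(M+1, 1^{N-1})` with entries in
`{0, …, d}`, encoded as a pair `(a, b)` where `a : Fin (M+1) → Fin (d+1)` is the
weakly increasing top row and `b : Fin N → Fin (d+1)` is the strictly increasing
first column, sharing the corner entry `a 0 = b 0`. -/
def hookSSYT (M N d : ℕ) :
    Finset ((Fin (M + 1) → Fin (d + 1)) × (Fin N → Fin (d + 1))) :=
  Finset.univ.filter fun t =>
    Monotone t.1 ∧ StrictMono t.2 ∧ ∀ h : 0 < N, t.1 0 = t.2 ⟨0, h⟩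

open Finset

theorem Fin.val_add_sub_le_of_strictMono {m K : ℕ} {g : Fin m → Fin K} (hg : StrictMono g)
    {i j : Fin m} (hij : i ≤ j) : (g i : ℕ) + (j - i) ≤ g j := by
  have key := card_le_card_of_injOn g (s := Icc i j) (t := Icc (g i) (g j))
    (fun x hx => by
      rw [coe_Icc, Set.mem_Icc] at hx
      simpa using And.intro (hg.monotone hx.1) (hg.monotone hx.2))
    hg.injective.injOn
  rw [Fin.card_Icc, Fin.card_Icc] at key
  have : g i ≤ g j := hg.monotone hij
  rw [Fin.le_def] at hij this
  omega

theorem card_filter_strictMono_mem_eq_choose {α : Type*} [LinearOrder α] [Fintype α]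
    (s : Finset α) (m : ℕ) :
    #{f : Fin m → α | StrictMono f ∧ ∀ i, f i ∈ s} = (#s).choose m := by
  rw [← card_powersetCard]
  refine card_bij' (fun f _ => univ.image f)
    (fun t ht => t.orderEmbOfFin (mem_powersetCard.1 ht).2) ?_ ?_ ?_ ?_
  · intro f hf
    rw [mem_filter] at hf
    rw [mem_powersetCard, card_image_of_injective _ hf.2.1.injective, card_univ, Fintype.card_fin]
    exact ⟨by simpa [subset_iff] using hf.2.2, rfl⟩
  · intro t ht
    rw [mem_filter]
    exact ⟨mem_univ _, (t.orderEmbOfFin _).strictMono,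
      fun i => (mem_powersetCard.1 ht).1 (orderEmbOfFin_mem _ _ i)⟩
  · intro f hf
    rw [mem_filter] at hf
    exact (orderEmbOfFin_unique _ (fun x => mem_image_of_mem f (mem_univ x)) hf.2.1).symm
  · intro t _
    exact image_orderEmbOfFin_univ _ _

theorem card_filter_strictMono_apply_zero_eq {α : Type*} [LinearOrder α] [Fintype α]
    [LocallyFiniteOrderTop α] (m : ℕ) (c : α) :
    #{f : Fin (m + 1) → α | StrictMono f ∧ f 0 = c} = (#(Ioi c)).choose m := by
  rw [← card_filter_strictMono_mem_eq_choose]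
  refine card_nbij' Fin.tail (fun g => Fin.cons c g) ?_ ?_ ?_ ?_
  · intro f hf
    simp only [coe_filter, mem_univ, true_and, Set.mem_ofPred_eq] at hf ⊢
    obtain ⟨hf, rfl⟩ := hf
    rw [← Fin.cons_self_tail f, Fin.strictMono_cons] at hf
    simpa using hf.symm
  · intro g hg
    simp only [coe_filter, mem_univ, true_and, Set.mem_ofPred_eq, mem_Ioi] at hg ⊢
    exact ⟨Fin.strictMono_cons.2 ⟨hg.2, hg.1⟩, rfl⟩
  · intro f hf
    simp only [coe_filter, mem_univ, true_and, Set.mem_ofPred_eq] at hf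
    simp [← hf.2]
  · intro g _
    simp

theorem card_filter_monotone_apply_zero_eq_card_strictMono (m n : ℕ) (c : Fin (n + 1)) :
    #{f : Fin (m + 1) → Fin (n + 1) | Monotone f ∧ f 0 = c} =
      #{g : Fin (m + 1) → Fin (n + m + 1) | StrictMono g ∧ g 0 = Fin.castLE (by omega) c} := by
  refine card_bij' (fun f _ i => ⟨f i + i, by omega⟩)
    (fun g hg i => ⟨g i - i, ?_⟩) ?_ ?_ ?_ ?_
  · rw [mem_filter] at hg
    have := Fin.val_add_sub_le_of_strictMono hg.2.1 (Fin.le_last i)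
    simp only [Fin.val_last] at this
    omega
  · intro f hf
    simp only [mem_filter, mem_univ, true_and] at hf ⊢
    refine ⟨fun i j hij => ?_, by ext; simp [hf.2]⟩
    have := hf.1 hij.le
    rw [Fin.lt_def] at hij ⊢
    rw [Fin.le_def] at this
    simp only
    omega
  · intro g hg
    simp only [mem_filter, mem_univ, true_and] at hg ⊢
    refine ⟨fun i j hij => ?_, by ext; simp [hg.2]⟩
    have := Fin.val_add_sub_le_of_strictMono hg.1 hij
    rw [Fin.le_def] at hij ⊢
    simp only
    omega
  · intro f _
    ext i
    simp
  · intro g hg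
    rw [mem_filter] at hg
    ext i
    have := Fin.val_add_sub_le_of_strictMono hg.2.1 (Fin.zero_le i)
    simp only [Fin.val_zero] at this
    simp only
    omega

theorem card_filter_monotone_fin_apply_zero_eq (m n : ℕ) (c : Fin (n + 1)) :
    #{f : Fin (m + 1) → Fin (n + 1) | Monotone f ∧ f 0 = c} = (n - c + m).choose m := by
  rw [card_filter_monotone_apply_zero_eq_card_strictMono, card_filter_strictMono_apply_zero_eq,
    Fin.card_Ioi, Fin.val_castLE]
  congr 1
  omega

theorem card_filter_strictMono_fin_apply_zero_eq (m n : ℕ) (c : Fin (n + 1)) :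
    #{f : Fin (m + 1) → Fin (n + 1) | StrictMono f ∧ f 0 = c} = (n - c).choose m := by
  rw [card_filter_strictMono_apply_zero_eq, Fin.card_Ioi, Nat.add_sub_cancel]

theorem Nat.sum_range_choose_eq_choose_succ (n k : ℕ) :
    ∑ i ∈ range n, i.choose k = n.choose (k + 1) := by
  induction n with
  | zero => simp
  | succ n ih => rw [sum_range_succ, ih, Nat.choose_succ_succ', add_comm]

theorem Nat.sum_range_add_choose_of_le {M K : ℕ} (h : M ≤ K) (d : ℕ) :
    ∑ k ∈ range (d + 1), (M + k).choose K = (M + d + 1).choose (K + 1) := by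
  have := sum_range_add (fun i => i.choose K) M (d + 1)
  rw [Nat.sum_range_choose_eq_choose_succ, Nat.sum_range_choose_eq_choose_succ,
    Nat.choose_eq_zero_of_lt (by omega : M < K + 1), zero_add] at this
  rw [← this, add_assoc]

theorem Nat.sum_range_add_choose_mul_choose (d M N : ℕ) :
    ∑ k ∈ range (d + 1), (k + M).choose M * k.choose N =
      (d + M + 1).choose (M + N + 1) * (M + N).choose M := by
  calc ∑ k ∈ range (d + 1), (k + M).choose M * k.choose N
      = ∑ k ∈ range (d + 1), (M + k).choose (M + N) * (M + N).choose M := by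
        refine sum_congr rfl fun k _ => ?_
        rw [Nat.choose_mul (Nat.le_add_right M N), Nat.add_sub_cancel_left,
          Nat.add_sub_cancel_left, add_comm k]
    _ = (d + M + 1).choose (M + N + 1) * (M + N).choose M := by
        rw [← sum_mul, Nat.sum_range_add_choose_of_le (Nat.le_add_right M N), add_comm M d]

theorem card_hookSSYT_eq_sum (M N d : ℕ) :
    #(hookSSYT M (N + 1) d) = ∑ c : Fin (d + 1),
      #{a : Fin (M + 1) → Fin (d + 1) | Monotone a ∧ a 0 = c} *
        #{b : Fin (N + 1) → Fin (d + 1) | StrictMono b ∧ b 0 = c} := by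
  rw [hookSSYT,
    card_eq_sum_card_fiberwise (f := fun t => t.1 0) (t := univ) (fun _ _ => mem_univ _)]
  refine sum_congr rfl fun c _ => ?_
  rw [← card_product]
  congr 1
  ext ⟨a, b⟩
  rw [mem_filter, mem_filter, mem_product, mem_filter, mem_filter]
  simp only [mem_univ, true_and, Fin.mk_zero]
  constructor
  · rintro ⟨⟨ha, hb, hab⟩, rfl⟩
    exact ⟨⟨ha, rfl⟩, hb, (hab N.succ_pos).symm⟩
  · rintro ⟨⟨ha, rfl⟩, hb, hba⟩
    exact ⟨⟨ha, hb, fun _ => hba.symm⟩, rfl⟩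

theorem card_hookSSYT_general (M N d : ℕ) (hN : 0 < N) :
    (hookSSYT M N d).card = (d + M + 1).choose (M + N) * (M + N - 1).choose M := by
  obtain ⟨N, rfl⟩ : ∃ N', N = N' + 1 := ⟨N - 1, by omega⟩
  calc #(hookSSYT M (N + 1) d)
      = ∑ c : Fin (d + 1), (d - c + M).choose M * (d - c).choose N := by
        simp only [card_hookSSYT_eq_sum, card_filter_monotone_fin_apply_zero_eq,
          card_filter_strictMono_fin_apply_zero_eq]
    _ = ∑ k ∈ range (d + 1), (k + M).choose M * k.choose N := by
        rw [Fin.sum_univ_eq_sum_range (fun c => (d - c + M).choose M * (d - c).choose N),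
          ← sum_range_reflect]
        refine sum_congr rfl fun k hk => ?_
        rw [Nat.add_sub_cancel, Nat.sub_sub_self (Nat.le_of_lt_succ (mem_range.1 hk))]
    _ = (d + M + 1).choose (M + (N + 1)) * (M + (N + 1) - 1).choose M := by
        rw [Nat.sum_range_add_choose_mul_choose, ← add_assoc, Nat.add_sub_cancel]

/-- The number of semistandard tableaux of hook shape `(M+1, 1^{N-1})` with
entries in `{0, 1, …, d}` is `(d+M+1 choose M+N) · (M+N-1 choose M)`. -/
theorem card_hookSSYT (M N d : ℕ) (hN : 0 < N) (hNd : N ≤ d + 1) :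
    (hookSSYT M N d).card = (d + M + 1).choose (M + N) * (M + N - 1).choose M :=
  card_hookSSYT_general M N d hN
end

section
/- For natural numbers M, d and positive N with N ≤ d+1, the identity q^{N(N−1)/2}·qbinom(M+N−1, M)·qbinom(M+d+1, M+N) = s_{(M+1,1^{N−1})}(1, q, …, q^d) holds, where s_{(M+1,1^{N−1})} is the Schur polynomial of hook shape in d+1 variables (the q-Hook Content Formula for hook shapes). -/
open Polynomial

/-- The Gaussian (q-)binomial coefficient `qbinom n m ∈ ℤ[q]`, defined by the
q-Pascal recursion; it equals `[n]_q! / ([m]_q! [n-m]_q!)`. -/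
noncomputable def qbinom : ℕ → ℕ → Polynomial ℤ
  | _, 0 => 1
  | 0, _ + 1 => 0
  | n + 1, m + 1 => qbinom n m + X ^ (m + 1) * qbinom n (m + 1)

noncomputable def qnum (n : ℕ) : Polynomial ℤ := ∑ i ∈ Finset.range n, X ^ i

noncomputable def qfact : ℕ → Polynomial ℤ
  | 0 => 1
  | n + 1 => qfact n * qnum (n + 1)

lemma qbinom_zero_right (n : ℕ) : qbinom n 0 = 1 := by cases n <;> rfl

lemma qbinom_succ_succ (n m : ℕ) :
    qbinom (n + 1) (m + 1) = qbinom n m + X ^ (m + 1) * qbinom n (m + 1) := rfl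

lemma qbinom_eq_zero : ∀ {n m : ℕ}, n < m → qbinom n m = 0
  | 0, _ + 1, _ => rfl
  | n + 1, m + 1, h => by
    rw [qbinom_succ_succ, qbinom_eq_zero (by omega), qbinom_eq_zero (by omega), mul_zero,
      add_zero]

lemma qbinom_self : ∀ n : ℕ, qbinom n n = 1
  | 0 => rfl
  | n + 1 => by
    rw [qbinom_succ_succ, qbinom_self n, qbinom_eq_zero (by omega), mul_zero, add_zero]

lemma qnum_ne_zero {n : ℕ} (h : 0 < n) : qnum n ≠ 0 := by
  intro hc
  have := congrArg (Polynomial.eval (1 : ℤ)) hc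
  simp [qnum, Polynomial.eval_finset_sum] at this
  omega

lemma qfact_ne_zero : ∀ n : ℕ, qfact n ≠ 0
  | 0 => one_ne_zero
  | n + 1 => mul_ne_zero (qfact_ne_zero n) (qnum_ne_zero n.succ_pos)

lemma qnum_add (a b : ℕ) : qnum (a + b) = qnum a + X ^ a * qnum b := by
  simp only [qnum, Finset.sum_range_add, pow_add, ← Finset.mul_sum]

lemma qbinom_mul_qfact : ∀ n m : ℕ, m ≤ n →
    qbinom n m * (qfact m * qfact (n - m)) = qfact n
  | 0, 0, _ => by simp [qbinom, qfact]
  | n + 1, 0, _ => by simp [qbinom_zero_right, qfact]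
  | n + 1, m + 1, h => by
    rcases Nat.lt_or_ge m n with hmn | hmn
    · have h1 := qbinom_mul_qfact n m (by omega)
      have h2 := qbinom_mul_qfact n (m + 1) (by omega)
      rw [qbinom_succ_succ, add_mul]
      have e1 : qfact (m + 1) = qfact m * qnum (m + 1) := rfl
      have e2 : n + 1 - (m + 1) = n - m := by omega
      have e3 : qfact (n - m) = qfact (n - m - 1) * qnum (n - m) := by
        have : n - m = (n - m - 1) + 1 := by omega
        rw [this]; rfl
      have e4 : n - (m + 1) = n - m - 1 := by omega
      calc qbinom n m * (qfact (m + 1) * qfact (n + 1 - (m + 1))) +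
            X ^ (m + 1) * qbinom n (m + 1) * (qfact (m + 1) * qfact (n + 1 - (m + 1)))
          = (qbinom n m * (qfact m * qfact (n - m))) * qnum (m + 1) +
            X ^ (m + 1) * ((qbinom n (m + 1) * (qfact (m + 1) * qfact (n - (m + 1)))) * qnum (n - m)) := by
            rw [e1, e2, e3, e4]; ring
        _ = qfact n * qnum (m + 1) + X ^ (m + 1) * (qfact n * qnum (n - m)) := by rw [h1, h2]
        _ = qfact n * (qnum (m + 1) + X ^ (m + 1) * qnum (n - m)) := by ring
        _ = qfact (n + 1) := by
            rw [← qnum_add]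
            have : m + 1 + (n - m) = n + 1 := by omega
            rw [this]; rfl
    · have hmn' : m = n := by omega
      subst hmn'
      simp [qbinom_self]
      show qfact (m + 1) * qfact 0 = qfact (m + 1)
      simp [qfact]

lemma qbinom_symm {n m : ℕ} (h : m ≤ n) : qbinom n m = qbinom n (n - m) := by
  have h1 := qbinom_mul_qfact n m h
  have h2 := qbinom_mul_qfact n (n - m) (by omega)
  have e : n - (n - m) = m := by omega
  rw [e] at h2
  have heq := h1.trans h2.symm
  have hne : qfact m * qfact (n - m) ≠ 0 := mul_ne_zero (qfact_ne_zero m) (qfact_ne_zero (n - m))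
  have : qbinom n m * (qfact m * qfact (n - m)) = qbinom n (n - m) * (qfact m * qfact (n - m)) := by
    rw [heq]; ring
  exact mul_right_cancel₀ hne this

lemma qbinom_pascal' {n m : ℕ} (h : m ≤ n) :
    qbinom (n + 1) (m + 1) = qbinom n (m + 1) + X ^ (n - m) * qbinom n m := by
  rcases Nat.eq_or_lt_of_le h with rfl | hlt
  · rw [qbinom_eq_zero (Nat.lt_succ_self m), qbinom_self m.succ, qbinom_self m, Nat.sub_self]
    simp
  · have s1 : qbinom n (m + 1) = qbinom n (n - m - 1) := by
      rw [qbinom_symm (show m + 1 ≤ n by omega)]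
      congr 1 <;> omega
    have s2 : qbinom n m = qbinom n (n - m) := qbinom_symm h
    rw [qbinom_symm (show m + 1 ≤ n + 1 by omega),
      show n + 1 - (m + 1) = (n - m - 1) + 1 by omega, qbinom_succ_succ,
      show n - m - 1 + 1 = n - m by omega, ← s1, ← s2]

lemma qbinom_trinom (a b n : ℕ) (h : a + b ≤ n) :
    qbinom (a + b) a * qbinom n (a + b) = qbinom n a * qbinom (n - a) b := by
  have hne : qfact a * qfact b * qfact (n - (a + b)) ≠ 0 :=
    mul_ne_zero (mul_ne_zero (qfact_ne_zero a) (qfact_ne_zero b)) (qfact_ne_zero _)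
  apply mul_right_cancel₀ hne
  have h1 := qbinom_mul_qfact (a + b) a (by omega)
  have h2 := qbinom_mul_qfact n (a + b) h
  have h3 := qbinom_mul_qfact n a (by omega)
  have h4 := qbinom_mul_qfact (n - a) b (by omega)
  have e1 : a + b - a = b := by omega
  have e2 : n - a - b = n - (a + b) := by omega
  rw [e1] at h1
  rw [e2] at h4
  calc qbinom (a + b) a * qbinom n (a + b) * (qfact a * qfact b * qfact (n - (a + b)))
      = (qbinom (a + b) a * (qfact a * qfact b)) * qbinom n (a + b) * qfact (n - (a + b)) := by ring
    _ = qbinom n (a + b) * (qfact (a + b) * qfact (n - (a + b))) := by rw [h1]; ring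
    _ = qfact n := h2
    _ = qbinom n a * (qfact a * qfact (n - a)) := h3.symm
    _ = qbinom n a * (qfact a * (qbinom (n - a) b * (qfact b * qfact (n - (a + b))))) := by rw [h4]
    _ = qbinom n a * qbinom (n - a) b * (qfact a * qfact b * qfact (n - (a + b))) := by ring

/-- Key q-Vandermonde-type identity. -/
lemma qbinom_key (M K : ℕ) : ∀ d : ℕ,
    qbinom (M + K) M * qbinom (M + d + 1) (M + K + 1) =
      ∑ c ∈ Finset.range (d + 1),
        X ^ (c * (M + K + 1)) * (qbinom (M + d - c) M * qbinom (d - c) K)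
  | 0 => by
    rcases Nat.eq_zero_or_pos K with rfl | hK
    · simp [qbinom_self, qbinom_zero_right]
    · have h1 : qbinom (M + 0 + 1) (M + K + 1) = 0 := qbinom_eq_zero (by omega)
      rw [Finset.sum_range_one, h1]
      simp [qbinom_eq_zero hK]
  | d + 1 => by
    rw [Finset.sum_range_succ' _ (d + 1)]
    have step : ∀ c ∈ Finset.range (d + 1),
        X ^ ((c + 1) * (M + K + 1)) * (qbinom (M + (d + 1) - (c + 1)) M * qbinom (d + 1 - (c + 1)) K)
          = X ^ (M + K + 1) * (X ^ (c * (M + K + 1)) * (qbinom (M + d - c) M * qbinom (d - c) K)) := by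
      intro c _
      have e1 : M + (d + 1) - (c + 1) = M + d - c := by omega
      have e2 : d + 1 - (c + 1) = d - c := by omega
      rw [e1, e2, add_one_mul, pow_add]
      ring
    rw [Finset.sum_congr rfl step, ← Finset.mul_sum, ← qbinom_key M K d]
    have pas : qbinom (M + (d + 1) + 1) (M + K + 1)
        = qbinom (M + d + 1) (M + K) + X ^ (M + K + 1) * qbinom (M + d + 1) (M + K + 1) := by
      have e : M + (d + 1) + 1 = (M + d + 1) + 1 := by omega
      rw [e, qbinom_succ_succ]
    have tri : qbinom (M + K) M * qbinom (M + d + 1) (M + K)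
        = qbinom (M + d + 1) M * qbinom (d + 1) K := by
      rcases le_or_gt K (d + 1) with hK | hK
      · have t := qbinom_trinom M K (M + d + 1) (by omega)
        rw [show M + d + 1 - M = d + 1 by omega] at t
        exact t
      · rw [qbinom_eq_zero (show M + d + 1 < M + K by omega),
          qbinom_eq_zero (show d + 1 < K by omega)]
        simp
    calc qbinom (M + K) M * qbinom (M + (d + 1) + 1) (M + K + 1)
        = qbinom (M + K) M * qbinom (M + d + 1) (M + K) +
            X ^ (M + K + 1) * (qbinom (M + K) M * qbinom (M + d + 1) (M + K + 1)) := by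
          rw [pas]; ring
      _ = X ^ (M + K + 1) * (qbinom (M + K) M * qbinom (M + d + 1) (M + K + 1)) +
            X ^ (0 * (M + K + 1)) * (qbinom (M + (d + 1) - 0) M * qbinom (d + 1 - 0) K) := by
          rw [tri, show M + (d + 1) - 0 = M + d + 1 from by omega,
            show d + 1 - 0 = d + 1 from by omega]
          try ring

def monoSet (m e : ℕ) : Finset (Fin m → Fin e) := Finset.univ.filter Monotone
def strictSet (m e : ℕ) : Finset (Fin m → Fin e) := Finset.univ.filter StrictMono

noncomputable def Sgf (m e : ℕ) : Polynomial ℤ := ∑ a ∈ monoSet m e, X ^ (∑ i, (a i : ℕ))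
noncomputable def Tgf (m e : ℕ) : Polynomial ℤ := ∑ a ∈ strictSet m e, X ^ (∑ i, (a i : ℕ))

lemma Sgf_zero_left (e : ℕ) : Sgf 0 e = 1 := by
  have h : monoSet 0 e = Finset.univ :=
    Finset.filter_true_of_mem (fun x _ => fun i => i.elim0)
  rw [Sgf, h]
  simp

lemma Tgf_zero_left (e : ℕ) : Tgf 0 e = 1 := by
  have h : strictSet 0 e = Finset.univ :=
    Finset.filter_true_of_mem (fun x _ => fun i => i.elim0)
  rw [Tgf, h]
  simp

lemma Sgf_zero_right (m : ℕ) : Sgf (m + 1) 0 = 0 := by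
  simp [Sgf, monoSet]

lemma Tgf_zero_right (m : ℕ) : Tgf (m + 1) 0 = 0 := by
  simp [Tgf, strictSet]

lemma Sgf_one_right (m : ℕ) : Sgf m 1 = 1 := by
  have h : monoSet m 1 = Finset.univ :=
    Finset.filter_true_of_mem (fun x _ => Subsingleton.monotone' x)
  rw [Sgf, h]
  have hu : (Finset.univ : Finset (Fin m → Fin 1)) = {fun _ => 0} := by
    apply Finset.eq_singleton_iff_unique_mem.mpr
    exact ⟨Finset.mem_univ _, fun y _ => funext fun i => Subsingleton.elim _ _⟩
  rw [hu, Finset.sum_singleton]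
  simp

lemma monotone_snoc {n : ℕ} {α : Type*} [Preorder α] (f : Fin n → α) (c : α)
    (hf : Monotone f) (hc : ∀ i, f i ≤ c) : Monotone (Fin.snoc f c) := by
  intro i j hij
  induction j using Fin.lastCases with
  | last =>
    induction i using Fin.lastCases with
    | last => simp
    | cast i => simp only [Fin.snoc_last, Fin.snoc_castSucc]; exact hc i
  | cast j =>
    induction i using Fin.lastCases with
    | last => exact absurd hij (not_le.mpr (Fin.castSucc_lt_last j))
    | cast i =>
      simp only [Fin.snoc_castSucc]
      exact hf (Fin.castSucc_le_castSucc_iff.mp hij)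

lemma strictMono_snoc {n : ℕ} {α : Type*} [Preorder α] (f : Fin n → α) (c : α)
    (hf : StrictMono f) (hc : ∀ i, f i < c) : StrictMono (Fin.snoc f c) := by
  intro i j hij
  induction j using Fin.lastCases with
  | last =>
    induction i using Fin.lastCases with
    | last => exact absurd hij (lt_irrefl _)
    | cast i => simp only [Fin.snoc_last, Fin.snoc_castSucc]; exact hc i
  | cast j =>
    induction i using Fin.lastCases with
    | last => exact absurd hij (not_lt.mpr (Fin.castSucc_lt_last j).le)
    | cast i =>
      simp only [Fin.snoc_castSucc]
      exact hf (Fin.castSucc_lt_castSucc_iff.mp hij)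

lemma mem_monoSet {m e : ℕ} {a : Fin m → Fin e} : a ∈ monoSet m e ↔ Monotone a := by
  simp [monoSet]

lemma mem_strictSet {m e : ℕ} {a : Fin m → Fin e} : a ∈ strictSet m e ↔ StrictMono a := by
  simp [strictSet]

lemma Sgf_recA (q e : ℕ) :
    ∑ a ∈ (monoSet (q + 1) (e + 1)).filter (fun a => a (Fin.last q) = Fin.last e),
      X ^ (∑ i, ((a i : ℕ))) = X ^ e * Sgf q (e + 1) := by
  rw [Sgf, Finset.mul_sum]
  refine Finset.sum_bij' (fun a _ => Fin.init a) (fun b _ => Fin.snoc b (Fin.last e))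
    ?_ ?_ ?_ ?_ ?_
  · intro a ha
    rw [Finset.mem_filter, mem_monoSet] at ha
    rw [mem_monoSet]
    intro i j hij
    simp only [Fin.init]
    exact ha.1 (Fin.castSucc_le_castSucc_iff.mpr hij)
  · intro b hb
    rw [mem_monoSet] at hb
    rw [Finset.mem_filter, mem_monoSet]
    exact ⟨monotone_snoc b _ hb (fun i => Fin.le_last _), Fin.snoc_last _ _⟩
  · intro a ha
    rw [Finset.mem_filter] at ha
    have h2 := Fin.snoc_init_self a
    rw [ha.2] at h2
    exact h2
  · intro b hb
    funext k
    simp [Fin.init]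
  · intro a ha
    rw [Finset.mem_filter] at ha
    rw [← pow_add]
    congr 1
    rw [Fin.sum_univ_castSucc, ha.2]
    simp [Fin.init, add_comm]

lemma Sgf_recB (q e : ℕ) :
    ∑ a ∈ (monoSet (q + 1) (e + 1)).filter (fun a => ¬ a (Fin.last q) = Fin.last e),
      X ^ (∑ i, ((a i : ℕ))) = Sgf (q + 1) e := by
  rw [Sgf]
  have key : ∀ a ∈ (monoSet (q + 1) (e + 1)).filter
      (fun a => ¬ a (Fin.last q) = Fin.last e), ∀ k, (a k : ℕ) < e := by
    intro a ha k
    rw [Finset.mem_filter, mem_monoSet] at ha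
    have h1 : a k ≤ a (Fin.last q) := ha.1 (Fin.le_last k)
    have h2 : a (Fin.last q) < Fin.last e := lt_of_le_of_ne (Fin.le_last _) ha.2
    have := lt_of_le_of_lt h1 h2
    simpa [Fin.lt_def] using this
  refine Finset.sum_bij' (fun a ha => fun k => (⟨(a k : ℕ), key a ha k⟩ : Fin e))
    (fun b _ => fun k => (b k).castSucc) ?_ ?_ ?_ ?_ ?_
  · intro a ha
    rw [Finset.mem_filter, mem_monoSet] at ha
    rw [mem_monoSet]
    intro i j hij
    simp only [Fin.mk_le_mk]
    exact ha.1 hij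
  · intro b hb
    rw [mem_monoSet] at hb
    rw [Finset.mem_filter, mem_monoSet]
    constructor
    · intro i j hij
      exact Fin.castSucc_le_castSucc_iff.mpr (hb hij)
    · intro hcon
      have := congrArg Fin.val hcon
      simp only [Fin.coe_castSucc, Fin.val_last] at this
      exact absurd this (Nat.ne_of_lt (b (Fin.last q)).isLt)
  · intro a ha
    funext k
    apply Fin.ext
    simp
  · intro b hb
    funext k
    apply Fin.ext
    simp
  · intro a ha
    rfl

lemma Sgf_rec (q e : ℕ) : Sgf (q + 1) (e + 1) = Sgf (q + 1) e + X ^ e * Sgf q (e + 1) := by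
  classical
  rw [Sgf, ← Finset.sum_filter_add_sum_filter_not (monoSet (q + 1) (e + 1))
    (fun a => a (Fin.last q) = Fin.last e), Sgf_recA, Sgf_recB, add_comm]

lemma Tgf_recA (q e : ℕ) :
    ∑ a ∈ (strictSet (q + 1) (e + 1)).filter (fun a => a (Fin.last q) = Fin.last e),
      X ^ (∑ i, ((a i : ℕ))) = X ^ e * Tgf q e := by
  rw [Tgf, Finset.mul_sum]
  have key : ∀ a ∈ (strictSet (q + 1) (e + 1)).filter
      (fun a => a (Fin.last q) = Fin.last e), ∀ k : Fin q, (a k.castSucc : ℕ) < e := by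
    intro a ha k
    rw [Finset.mem_filter, mem_strictSet] at ha
    have h1 : a k.castSucc < a (Fin.last q) := ha.1 (Fin.castSucc_lt_last k)
    rw [ha.2] at h1
    simpa [Fin.lt_def] using h1
  refine Finset.sum_bij' (fun a ha => fun k => (⟨(a k.castSucc : ℕ), key a ha k⟩ : Fin e))
    (fun b _ => Fin.snoc (fun k => (b k).castSucc) (Fin.last e)) ?_ ?_ ?_ ?_ ?_
  · intro a ha
    rw [Finset.mem_filter, mem_strictSet] at ha
    rw [mem_strictSet]
    intro i j hij
    simp only [Fin.mk_lt_mk]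
    exact ha.1 (Fin.castSucc_lt_castSucc_iff.mpr hij)
  · intro b hb
    rw [mem_strictSet] at hb
    rw [Finset.mem_filter, mem_strictSet]
    constructor
    · apply strictMono_snoc
      · intro i j hij
        exact Fin.castSucc_lt_castSucc_iff.mpr (hb hij)
      · intro i
        exact Fin.castSucc_lt_last _
    · simp
  · intro a ha
    rw [Finset.mem_filter] at ha
    funext i
    induction i using Fin.lastCases with
    | last => simpa using ha.2.symm
    | cast k => apply Fin.ext; simp
  · intro b hb
    funext k
    apply Fin.ext
    simp
  · intro a ha
    rw [Finset.mem_filter] at ha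
    rw [← pow_add]
    congr 1
    rw [Fin.sum_univ_castSucc, ha.2]
    simp [add_comm]

lemma Tgf_recB (q e : ℕ) :
    ∑ a ∈ (strictSet (q + 1) (e + 1)).filter (fun a => ¬ a (Fin.last q) = Fin.last e),
      X ^ (∑ i, ((a i : ℕ))) = Tgf (q + 1) e := by
  rw [Tgf]
  have key : ∀ a ∈ (strictSet (q + 1) (e + 1)).filter
      (fun a => ¬ a (Fin.last q) = Fin.last e), ∀ k, (a k : ℕ) < e := by
    intro a ha k
    rw [Finset.mem_filter, mem_strictSet] at ha
    have h1 : a k ≤ a (Fin.last q) := ha.1.monotone (Fin.le_last k)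
    have h2 : a (Fin.last q) < Fin.last e := lt_of_le_of_ne (Fin.le_last _) ha.2
    have := lt_of_le_of_lt h1 h2
    simpa [Fin.lt_def] using this
  refine Finset.sum_bij' (fun a ha => fun k => (⟨(a k : ℕ), key a ha k⟩ : Fin e))
    (fun b _ => fun k => (b k).castSucc) ?_ ?_ ?_ ?_ ?_
  · intro a ha
    rw [Finset.mem_filter, mem_strictSet] at ha
    rw [mem_strictSet]
    intro i j hij
    simp only [Fin.mk_lt_mk]
    exact ha.1 hij
  · intro b hb
    rw [mem_strictSet] at hb
    rw [Finset.mem_filter, mem_strictSet]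
    constructor
    · intro i j hij
      exact Fin.castSucc_lt_castSucc_iff.mpr (hb hij)
    · intro hcon
      have := congrArg Fin.val hcon
      simp only [Fin.coe_castSucc, Fin.val_last] at this
      exact absurd this (Nat.ne_of_lt (b (Fin.last q)).isLt)
  · intro a ha
    funext k
    apply Fin.ext
    simp
  · intro b hb
    funext k
    apply Fin.ext
    simp
  · intro a ha
    rfl

lemma Tgf_rec (q e : ℕ) : Tgf (q + 1) (e + 1) = Tgf (q + 1) e + X ^ e * Tgf q e := by
  classical
  rw [Tgf, ← Finset.sum_filter_add_sum_filter_not (strictSet (q + 1) (e + 1))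
    (fun a => a (Fin.last q) = Fin.last e), Tgf_recA, Tgf_recB, add_comm]

lemma Tgf_eq : ∀ k e : ℕ, Tgf k e = X ^ (k.choose 2) * qbinom e k
  | 0, e => by simp [Tgf_zero_left, qbinom_zero_right]
  | q + 1, 0 => by
    rw [Tgf_zero_right, qbinom_eq_zero (Nat.succ_pos q), mul_zero]
  | q + 1, e + 1 => by
    rw [Tgf_rec, Tgf_eq (q + 1) e, Tgf_eq q e]
    have c2 : (q + 1).choose 2 = q + q.choose 2 := by
      rw [Nat.choose_succ_succ, Nat.choose_one_right]
    rcases le_or_gt q e with hq | hq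
    · rw [qbinom_pascal' hq, mul_add]
      congr 1
      have he : e + q.choose 2 = (q + 1).choose 2 + (e - q) := by omega
      rw [← mul_assoc, ← mul_assoc, ← pow_add, ← pow_add, he]
    · rw [qbinom_eq_zero (show e + 1 < q + 1 by omega),
        qbinom_eq_zero (show e < q + 1 by omega), qbinom_eq_zero hq]
      simp
termination_by k e => e

lemma Sgf_eq : ∀ m e : ℕ, Sgf m (e + 1) = qbinom (m + e) m
  | 0, e => by
    rw [Sgf_zero_left, qbinom_zero_right]
  | q + 1, 0 => by
    rw [Sgf_one_right, Nat.add_zero, qbinom_self]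
  | q + 1, e + 1 => by
    rw [show e + 1 + 1 = (e + 1) + 1 from rfl, Sgf_rec, Sgf_eq (q + 1) e, Sgf_eq q (e + 1)]
    have pas := qbinom_pascal' (show q ≤ q + e + 1 by omega)
    rw [show q + e + 1 - q = e + 1 by omega] at pas
    rw [show q + 1 + (e + 1) = q + e + 1 + 1 by omega, pas,
      show q + 1 + e = q + e + 1 by omega, show q + (e + 1) = q + e + 1 by omega]
termination_by m e => (m, e)

lemma monotone_cons {n : ℕ} {α : Type*} [Preorder α] (c : α) (f : Fin n → α)
    (hf : Monotone f) (hc : ∀ i, c ≤ f i) : Monotone (Fin.cons c f) := by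
  intro i j hij
  induction i using Fin.cases with
  | zero =>
    induction j using Fin.cases with
    | zero => exact le_refl _
    | succ j => simp only [Fin.cons_zero, Fin.cons_succ]; exact hc j
  | succ i =>
    induction j using Fin.cases with
    | zero => exact absurd hij (not_le.mpr (Fin.succ_pos i))
    | succ j =>
      simp only [Fin.cons_succ]
      exact hf (Fin.succ_le_succ_iff.mp hij)

lemma strictMono_cons {n : ℕ} {α : Type*} [Preorder α] (c : α) (f : Fin n → α)
    (hf : StrictMono f) (hc : ∀ i, c < f i) : StrictMono (Fin.cons c f) := by
  intro i j hij
  induction i using Fin.cases with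
  | zero =>
    induction j using Fin.cases with
    | zero => exact absurd hij (lt_irrefl _)
    | succ j => simp only [Fin.cons_zero, Fin.cons_succ]; exact hc j
  | succ i =>
    induction j using Fin.cases with
    | zero => exact absurd hij (not_lt.mpr (Fin.zero_le _))
    | succ j =>
      simp only [Fin.cons_succ]
      exact hf (Fin.succ_lt_succ_iff.mp hij)

lemma rowGF (M d : ℕ) (c : Fin (d + 1)) :
    ∑ a ∈ Finset.univ.filter (fun a : Fin (M + 1) → Fin (d + 1) => Monotone a ∧ a 0 = c),
      X ^ (∑ i, ((a i) : ℕ)) = X ^ ((c : ℕ) * (M + 1)) * Sgf M ((d - (c : ℕ)) + 1) := by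
  rw [Sgf, Finset.mul_sum]
  have hcd : (c : ℕ) ≤ d := by omega
  have key : ∀ a ∈ Finset.univ.filter
      (fun a : Fin (M + 1) → Fin (d + 1) => Monotone a ∧ a 0 = c),
      ∀ k : Fin M, ((a k.succ : ℕ) - (c : ℕ)) < (d - (c : ℕ)) + 1 := by
    intro a _ k
    have := (a k.succ).isLt
    omega
  have vge : ∀ a ∈ Finset.univ.filter
      (fun a : Fin (M + 1) → Fin (d + 1) => Monotone a ∧ a 0 = c),
      ∀ k : Fin M, (c : ℕ) ≤ (a k.succ : ℕ) := by
    intro a ha k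
    rw [Finset.mem_filter] at ha
    have h1 : a 0 ≤ a k.succ := ha.2.1 (Fin.zero_le _)
    rw [ha.2.2] at h1
    exact h1
  have keyj : ∀ b : Fin M → Fin ((d - (c : ℕ)) + 1), ∀ k : Fin M,
      (c : ℕ) + (b k : ℕ) < d + 1 := by
    intro b k
    have := (b k).isLt
    omega
  refine Finset.sum_bij'
    (fun a ha => fun k => (⟨(a k.succ : ℕ) - (c : ℕ), key a ha k⟩ : Fin ((d - (c : ℕ)) + 1)))
    (fun b _ => Fin.cons c (fun k => (⟨(c : ℕ) + (b k : ℕ), keyj b k⟩ : Fin (d + 1))))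
    ?_ ?_ ?_ ?_ ?_
  · intro a ha
    rw [mem_monoSet]
    intro i j hij
    rw [Finset.mem_filter] at ha
    have := ha.2.1 (Fin.succ_le_succ_iff.mpr hij)
    rw [Fin.le_def] at this ⊢
    simp only
    omega
  · intro b hb
    rw [mem_monoSet] at hb
    rw [Finset.mem_filter]
    refine ⟨Finset.mem_univ _, ?_, Fin.cons_zero _ _⟩
    apply monotone_cons
    · intro i j hij
      have := hb hij
      rw [Fin.le_def] at this ⊢
      simp only
      omega
    · intro i
      rw [Fin.le_def]
      simp
  · intro a ha
    have hge := vge a ha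
    rw [Finset.mem_filter] at ha
    funext i
    induction i using Fin.cases with
    | zero => simp only [Fin.cons_zero]; exact ha.2.2.symm
    | succ k =>
      simp only [Fin.cons_succ]
      apply Fin.ext
      simp only
      have := hge k
      omega
  · intro b hb
    funext k
    apply Fin.ext
    simp only [Fin.cons_succ]
    omega
  · intro a ha
    have hge := vge a ha
    rw [Finset.mem_filter] at ha
    rw [← pow_add]
    congr 1
    rw [Fin.sum_univ_succ]
    have h0 : (a 0 : ℕ) = (c : ℕ) := congrArg Fin.val ha.2.2
    have hsum : ∑ k : Fin M, (a k.succ : ℕ)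
        = (∑ k : Fin M, ((a k.succ : ℕ) - (c : ℕ))) + M * (c : ℕ) := by
      have hv : ∀ k : Fin M, (a k.succ : ℕ) = ((a k.succ : ℕ) - (c : ℕ)) + (c : ℕ) := by
        intro k
        have := hge k
        omega
      rw [Finset.sum_congr rfl (fun k _ => hv k), Finset.sum_add_distrib, Finset.sum_const]
      simp [mul_comm]
    have hm : (c : ℕ) * (M + 1) = M * (c : ℕ) + (c : ℕ) := by ring
    simp only
    omega

lemma colGF (K d : ℕ) (c : Fin (d + 1)) :
    ∑ b ∈ Finset.univ.filter (fun b : Fin (K + 1) → Fin (d + 1) => StrictMono b ∧ b 0 = c),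
      X ^ (∑ i : Fin K, ((b i.succ) : ℕ)) = X ^ (K * ((c : ℕ) + 1)) * Tgf K (d - (c : ℕ)) := by
  rw [Tgf, Finset.mul_sum]
  have vgt : ∀ b ∈ Finset.univ.filter
      (fun b : Fin (K + 1) → Fin (d + 1) => StrictMono b ∧ b 0 = c),
      ∀ k : Fin K, (c : ℕ) < (b k.succ : ℕ) := by
    intro b hb k
    rw [Finset.mem_filter] at hb
    have h1 : b 0 < b k.succ := hb.2.1 (Fin.succ_pos k)
    rw [hb.2.2] at h1
    exact h1
  have key : ∀ b ∈ Finset.univ.filter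
      (fun b : Fin (K + 1) → Fin (d + 1) => StrictMono b ∧ b 0 = c),
      ∀ k : Fin K, ((b k.succ : ℕ) - ((c : ℕ) + 1)) < d - (c : ℕ) := by
    intro b hb k
    have h1 := vgt b hb k
    have h2 := (b k.succ).isLt
    omega
  have keyj : ∀ b' : Fin K → Fin (d - (c : ℕ)), ∀ k : Fin K,
      (c : ℕ) + 1 + (b' k : ℕ) < d + 1 := by
    intro b' k
    have := (b' k).isLt
    omega
  refine Finset.sum_bij'
    (fun b hb => fun k => (⟨(b k.succ : ℕ) - ((c : ℕ) + 1), key b hb k⟩ : Fin (d - (c : ℕ))))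
    (fun b' _ => Fin.cons c (fun k => (⟨(c : ℕ) + 1 + (b' k : ℕ), keyj b' k⟩ : Fin (d + 1))))
    ?_ ?_ ?_ ?_ ?_
  · intro b hb
    have hgt := vgt b hb
    rw [mem_strictSet]
    intro i j hij
    rw [Finset.mem_filter] at hb
    have := hb.2.1 (Fin.succ_lt_succ_iff.mpr hij)
    rw [Fin.lt_def] at this ⊢
    have h1 := hgt i
    simp only
    omega
  · intro b' hb'
    rw [mem_strictSet] at hb'
    rw [Finset.mem_filter]
    refine ⟨Finset.mem_univ _, ?_, Fin.cons_zero _ _⟩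
    apply strictMono_cons
    · intro i j hij
      have := hb' hij
      rw [Fin.lt_def] at this ⊢
      simp only
      omega
    · intro i
      rw [Fin.lt_def]
      simp only
      omega
  · intro b hb
    have hgt := vgt b hb
    rw [Finset.mem_filter] at hb
    funext i
    induction i using Fin.cases with
    | zero => simp only [Fin.cons_zero]; exact hb.2.2.symm
    | succ k =>
      simp only [Fin.cons_succ]
      apply Fin.ext
      simp only
      have := hgt k
      omega
  · intro b' hb'
    funext k
    apply Fin.ext
    simp only [Fin.cons_succ]
    omega
  · intro b hb
    have hgt := vgt b hb
    rw [← pow_add]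
    congr 1
    have hv : ∀ k : Fin K, (b k.succ : ℕ)
        = ((b k.succ : ℕ) - ((c : ℕ) + 1)) + ((c : ℕ) + 1) := by
      intro k
      have := hgt k
      omega
    rw [Finset.sum_congr rfl (fun k _ => hv k), Finset.sum_add_distrib, Finset.sum_const]
    simp only [Finset.card_univ, Fintype.card_fin, smul_eq_mul]
    omega

/-- The sum of all entries of a hook tableau, with the corner entry counted
only once. -/
def hookWeight {M N d : ℕ} (hN : 0 < N)
    (t : (Fin (M + 1) → Fin (d + 1)) × (Fin N → Fin (d + 1))) : ℕ :=
  (∑ i, (t.1 i : ℕ)) + ∑ i ∈ Finset.univ.erase (⟨0, hN⟩ : Fin N), (t.2 i : ℕ)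

/-- The q-Hook Content Formula for hook shapes: the Schur polynomial of shape
`(M+1, 1^{N-1})` evaluated at `1, q, …, q^d` (the generating function of
semistandard hook tableaux by total weight) equals
`q^{N(N-1)/2} · qbinom (M+N-1) M · qbinom (M+d+1) (M+N)`. -/
theorem qbinom_hook_content (M N d : ℕ) (hN : 0 < N) (hNd : N ≤ d + 1) :
    X ^ (N * (N - 1) / 2) * qbinom (M + N - 1) M * qbinom (M + d + 1) (M + N) =
      ∑ t ∈ hookSSYT M N d, X ^ hookWeight hN t := by
  classical
  obtain ⟨K, rfl⟩ : ∃ K, N = K + 1 := ⟨N - 1, by omega⟩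
  -- rewrite hookWeight
  have hw : ∀ t ∈ hookSSYT M (K + 1) d,
      (X : Polynomial ℤ) ^ hookWeight hN t
        = X ^ ((∑ i, ((t.1 i) : ℕ)) + ∑ i : Fin K, ((t.2 i.succ) : ℕ)) := by
    intro t _
    congr 1
    rw [hookWeight]
    congr 1
    have h1 : (⟨0, hN⟩ : Fin (K + 1)) = 0 := by apply Fin.ext; rfl
    have h2 := Fin.sum_univ_succ (fun i => ((t.2 i) : ℕ))
    have h3 := Finset.add_sum_erase Finset.univ (fun i => ((t.2 i) : ℕ))
      (Finset.mem_univ (0 : Fin (K + 1)))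
    rw [h1]
    omega
  rw [Finset.sum_congr rfl hw,
    ← Finset.sum_fiberwise (hookSSYT M (K + 1) d) (fun t => t.2 0)
      (fun t => (X : Polynomial ℤ) ^ ((∑ i, ((t.1 i) : ℕ)) + ∑ i : Fin K, ((t.2 i.succ) : ℕ)))]
  -- fiber over c is a product
  have prodEq : ∀ c : Fin (d + 1),
      (hookSSYT M (K + 1) d).filter (fun t => t.2 0 = c)
        = (Finset.univ.filter (fun a : Fin (M + 1) → Fin (d + 1) => Monotone a ∧ a 0 = c)) ×ˢ
          (Finset.univ.filter (fun b : Fin (K + 1) → Fin (d + 1) => StrictMono b ∧ b 0 = c)) := by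
    intro c
    ext t
    obtain ⟨a, b⟩ := t
    simp only [hookSSYT, Finset.mem_filter, Finset.mem_product, Finset.mem_univ, true_and]
    have h1 : ∀ h : 0 < K + 1, (⟨0, h⟩ : Fin (K + 1)) = 0 := fun _ => by apply Fin.ext; rfl
    constructor
    · rintro ⟨⟨hm, hs, hc⟩, h0⟩
      have hc' := hc hN
      rw [h1 hN] at hc'
      exact ⟨⟨hm, by rw [hc', h0]⟩, hs, h0⟩
    · rintro ⟨⟨hm, ha0⟩, hs, hb0⟩
      refine ⟨⟨hm, hs, fun h => ?_⟩, hb0⟩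
      rw [h1 h, ha0, hb0]
  have fiber : ∀ c : Fin (d + 1),
      ∑ t ∈ (hookSSYT M (K + 1) d).filter (fun t => t.2 0 = c),
        (X : Polynomial ℤ) ^ ((∑ i, ((t.1 i) : ℕ)) + ∑ i : Fin K, ((t.2 i.succ) : ℕ))
      = (X ^ ((c : ℕ) * (M + 1)) * Sgf M ((d - (c : ℕ)) + 1)) *
        (X ^ (K * ((c : ℕ) + 1)) * Tgf K (d - (c : ℕ))) := by
    intro c
    rw [prodEq c, Finset.sum_product, ← rowGF M d c, ← colGF K d c, Finset.sum_mul_sum]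
    simp only [pow_add]
  rw [Finset.sum_congr rfl (fun c _ => fiber c)]
  -- now pure algebra
  have hsub : M + (K + 1) - 1 = M + K := by omega
  have hMN : M + (K + 1) = M + K + 1 := by omega
  have hNN : (K + 1) * (K + 1 - 1) / 2 = (K + 1) * K / 2 := by
    rw [Nat.add_sub_cancel]
  rw [hsub, hMN, hNN, mul_assoc, qbinom_key M K d, Finset.mul_sum]
  rw [Fin.sum_univ_eq_sum_range (fun c =>
    (X ^ (c * (M + 1)) * Sgf M ((d - c) + 1)) * (X ^ (K * (c + 1)) * Tgf K (d - c))) (d + 1)]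
  refine Finset.sum_congr rfl ?_
  intro c hc
  rw [Finset.mem_range] at hc
  rw [Sgf_eq M (d - c), Tgf_eq K (d - c),
    show M + (d - c) = M + d - c by omega, Nat.choose_two_right]
  have h : (K + 1) * K / 2 = K * (K - 1) / 2 + K := by
    rcases K with _ | K'
    · simp
    · have h2 : (K' + 1 + 1) * (K' + 1) = (K' + 1) * K' + 2 * (K' + 1) := by ring
      simp only [Nat.add_sub_cancel]
      omega
  rw [h]
  ring
end
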